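/- arXiv:1211.1660 — 4 statements merged into one kernel-verified Lean document; each statement's English description precedes it below -/
import Mathlib

section
/- For all real numbers a ≥ 0 and b ≥ 0, every natural number N ≥ 1, and nonnegative reals P₁,…,P_N, letting P̄ = (1/N)·∑_{i=1}^N P_i denote their average, one has (1/N)·∑_{i=1}^N log(1 + a·P_i/(1 + b·P_i)) ≤ log(1 + a·P̄/(1 + b·P̄)). -/
/-! The function `x ↦ log (1 + a x / (1 + b x))` is concave on `[0, ∞)`, since its derivative
`a / ((1 + b x) (1 + (a + b) x))` is antitone there; the claim is Jensen's inequality for the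
uniform weights `1 / N`. -/

open Finset Set

section Jensen

variable {𝕜 E β ι : Type*} [Field 𝕜] [LinearOrder 𝕜] [IsStrictOrderedRing 𝕜] [AddCommGroup E]
  [AddCommGroup β] [PartialOrder β] [IsOrderedAddMonoid β] [Module 𝕜 E] [Module 𝕜 β]
  [IsStrictOrderedModule 𝕜 β] {s : Set E} {f : E → β} {t : Finset ι} {p : ι → E}

theorem ConcaveOn.le_map_mean (hf : ConcaveOn 𝕜 s f) (ht : t.Nonempty)
    (hmem : ∀ i ∈ t, p i ∈ s) :
    (#t : 𝕜)⁻¹ • ∑ i ∈ t, f (p i) ≤ f ((#t : 𝕜)⁻¹ • ∑ i ∈ t, p i) := by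
  simpa [centerMass] using
    hf.le_map_centerMass (w := fun _ => (1 : 𝕜)) (fun _ _ => zero_le_one) (by simpa using ht) hmem

end Jensen

theorem hasDerivAt_log_one_add_mul_div {a b x : ℝ} (hb : 1 + b * x ≠ 0)
    (hab : 1 + (a + b) * x ≠ 0) :
    HasDerivAt (fun y => Real.log (1 + a * y / (1 + b * y)))
      (a / ((1 + b * x) * (1 + (a + b) * x))) x := by
  have hnum : HasDerivAt (fun y => a * y) a x := by
    simpa using (hasDerivAt_id x).const_mul a
  have hden : HasDerivAt (fun y => 1 + b * y) b x := by
    simpa using ((hasDerivAt_id x).const_mul b).const_add 1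
  have hinner : HasDerivAt (fun y => 1 + a * y / (1 + b * y)) (a / (1 + b * x) ^ 2) x :=
    ((hnum.div hden hb).const_add 1).congr_deriv (by ring)
  have hne : 1 + a * x / (1 + b * x) ≠ 0 := by
    rw [one_add_div hb, div_ne_zero_iff]
    exact ⟨by convert hab using 1; ring, hb⟩
  convert hinner.log hne using 1
  field_simp
  ring

theorem concaveOn_log_one_add_mul_div {a b : ℝ} (ha : 0 ≤ a) (hb : 0 ≤ b) :
    ConcaveOn ℝ (Ici 0) (fun x => Real.log (1 + a * x / (1 + b * x))) := by
  have hderiv : ∀ x ∈ Ici (0 : ℝ), HasDerivAt (fun y => Real.log (1 + a * y / (1 + b * y)))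
      (a / ((1 + b * x) * (1 + (a + b) * x))) x := fun x (hx : 0 ≤ x) =>
    hasDerivAt_log_one_add_mul_div (by positivity) (by positivity)
  refine AntitoneOn.concaveOn_of_deriv (convex_Ici 0)
    (fun x hx => (hderiv x hx).continuousAt.continuousWithinAt) ?_ ?_ <;> rw [interior_Ici]
  · exact fun x (hx : 0 < x) => (hderiv x hx.le).differentiableAt.differentiableWithinAt
  intro x (hx : 0 < x) y (hy : 0 < y) hxy
  rw [(hderiv x hx.le).deriv, (hderiv y hy.le).deriv]
  gcongr

open Finset in
/-- For `a, b ≥ 0`, `N ≥ 1` and nonnegative reals `P₁, …, P_N` with average `P̄`,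
`(1/N)·∑ log (1 + a·Pᵢ/(1 + b·Pᵢ)) ≤ log (1 + a·P̄/(1 + b·P̄))`. -/
theorem avg_log_rate_le_log_rate_avg (a b : ℝ) (ha : 0 ≤ a) (hb : 0 ≤ b)
    (N : ℕ) (hN : 1 ≤ N) (P : Fin N → ℝ) (hP : ∀ i, 0 ≤ P i)
    (Pbar : ℝ) (hPbar : Pbar = (1 / (N : ℝ)) * ∑ i, P i) :
    (1 / (N : ℝ)) * ∑ i, Real.log (1 + a * P i / (1 + b * P i)) ≤
      Real.log (1 + a * Pbar / (1 + b * Pbar)) := by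
  have hne : (univ : Finset (Fin N)).Nonempty := univ_nonempty_iff.mpr ⟨⟨0, hN⟩⟩
  simpa [hPbar] using (concaveOn_log_one_add_mul_div ha hb).le_map_mean hne fun i _ => hP i
end

section
/- Let (Ω, μ) be a probability space and let H, G : Ω → ℝ be nonnegative measurable functions with G > 0 almost everywhere, such that ω ↦ log(1 + H(ω)/G(ω)) is integrable and H is integrable. For P > 0 define S(P) as the supremum, over all measurable functions f : ℝ → ℝ with f ≥ 0 and ∫ f(H(ω)) dμ(ω) ≤ P, of ∫ log(1 + f(H(ω))·H(ω)/(1 + f(H(ω))·G(ω))) dμ(ω). Then S(P) tends to ∫ log(1 + H(ω)/G(ω)) dμ(ω) as P tends to infinity. -/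
/-!
Every admissible allocation satisfies `x H / (1 + x G) ≤ H / G` pointwise, so `S(P)` never exceeds
`∫ log (1 + H/G)`. Conversely the constant allocation `f ≡ P` is admissible, and its rate tends to
`∫ log (1 + H/G)` by dominated convergence, the limit itself being an integrable dominating function.
-/

open Filter MeasureTheory Topology

namespace Real

theorem log_one_add_mul_div_one_add_mul_nonneg {x h g : ℝ} (hx : 0 ≤ x) (hh : 0 ≤ h)
    (hg : 0 ≤ g) : 0 ≤ log (1 + x * h / (1 + x * g)) :=
  log_nonneg (le_add_of_nonneg_right (by positivity))

theorem log_one_add_mul_div_one_add_mul_le {x h g : ℝ} (hx : 0 ≤ x) (hh : 0 ≤ h) (hg : 0 < g) :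
    log (1 + x * h / (1 + x * g)) ≤ log (1 + h / g) := by
  have hden : 0 < 1 + x * g := by positivity
  refine log_le_log (by positivity) (add_le_add_right ?_ 1)
  rw [div_le_div_iff₀ hden hg]
  nlinarith [mul_nonneg hx (mul_nonneg hh hg.le)]

theorem tendsto_log_one_add_mul_div_one_add_mul_atTop {h g : ℝ} (hh : 0 ≤ h) (hg : 0 < g) :
    Tendsto (fun x => log (1 + x * h / (1 + x * g))) atTop (𝓝 (log (1 + h / g))) := by
  have hden : Tendsto (fun x : ℝ => x⁻¹ + g) atTop (𝓝 g) := by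
    simpa using tendsto_inv_atTop_zero.add_const g
  have hinv : Tendsto (fun x : ℝ => h / (x⁻¹ + g)) atTop (𝓝 (h / g)) :=
    tendsto_const_nhds.div hden hg.ne'
  have hratio : Tendsto (fun x => x * h / (1 + x * g)) atTop (𝓝 (h / g)) := by
    refine hinv.congr' ?_
    filter_upwards [eventually_gt_atTop 0] with x hx
    field_simp
  exact (continuousAt_log (by positivity)).tendsto.comp (hratio.const_add 1)

end Real

section ConstrainedRate

variable {Ω : Type*} [MeasurableSpace Ω] {μ : Measure Ω} {H G : Ω → ℝ}

theorem integral_log_one_add_div_nonneg (hH : ∀ ω, 0 ≤ H ω) (hG : ∀ᵐ ω ∂μ, 0 < G ω) :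
    0 ≤ ∫ ω, Real.log (1 + H ω / G ω) ∂μ := by
  refine integral_nonneg_of_ae ?_
  filter_upwards [hG] with ω hg
  exact Real.log_nonneg (le_add_of_nonneg_right (div_nonneg (hH ω) hg.le))

theorem integral_log_one_add_mul_div_one_add_mul_le (hH : ∀ ω, 0 ≤ H ω) (hG : ∀ᵐ ω ∂μ, 0 < G ω)
    (hint : Integrable (fun ω => Real.log (1 + H ω / G ω)) μ) {p : Ω → ℝ} (hp : ∀ ω, 0 ≤ p ω) :
    ∫ ω, Real.log (1 + p ω * H ω / (1 + p ω * G ω)) ∂μ ≤ ∫ ω, Real.log (1 + H ω / G ω) ∂μ := by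
  by_cases hi : Integrable (fun ω => Real.log (1 + p ω * H ω / (1 + p ω * G ω))) μ
  · refine integral_mono_ae hi hint ?_
    filter_upwards [hG] with ω hg
    exact Real.log_one_add_mul_div_one_add_mul_le (hp ω) (hH ω) hg
  · rw [integral_undef hi]
    exact integral_log_one_add_div_nonneg hH hG

theorem tendsto_integral_log_one_add_mul_div_one_add_mul_atTop (hHm : Measurable H)
    (hGm : Measurable G) (hH : ∀ ω, 0 ≤ H ω) (hG : ∀ᵐ ω ∂μ, 0 < G ω)
    (hint : Integrable (fun ω => Real.log (1 + H ω / G ω)) μ) :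
    Tendsto (fun x : ℝ => ∫ ω, Real.log (1 + x * H ω / (1 + x * G ω)) ∂μ) atTop
      (𝓝 (∫ ω, Real.log (1 + H ω / G ω) ∂μ)) := by
  refine tendsto_integral_filter_of_dominated_convergence _ ?_ ?_ hint ?_
  · exact Eventually.of_forall fun x => (measurable_const.add
      ((hHm.const_mul x).div (measurable_const.add (hGm.const_mul x)))).log.aestronglyMeasurable
  · filter_upwards [eventually_ge_atTop 0] with x hx
    filter_upwards [hG] with ω hg
    rw [Real.norm_of_nonneg (Real.log_one_add_mul_div_one_add_mul_nonneg hx (hH ω) hg.le)]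
    exact Real.log_one_add_mul_div_one_add_mul_le hx (hH ω) hg
  · filter_upwards [hG] with ω hg
    exact Real.tendsto_log_one_add_mul_div_one_add_mul_atTop (hH ω) hg

end ConstrainedRate

open Filter MeasureTheory in
theorem tendsto_sSup_power_constrained_rate_atTop_general
    {Ω : Type*} [MeasurableSpace Ω] (μ : Measure Ω) [IsProbabilityMeasure μ]
    (H G : Ω → ℝ) (hHm : Measurable H) (hGm : Measurable G)
    (hH : ∀ ω, 0 ≤ H ω) (hG : ∀ᵐ ω ∂μ, 0 < G ω)
    (hint : Integrable (fun ω => Real.log (1 + H ω / G ω)) μ) :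
    Tendsto (fun P : ℝ =>
        sSup {r : ℝ | ∃ f : ℝ → ℝ, Measurable f ∧ (∀ x, 0 ≤ f x) ∧
          (∫ ω, f (H ω) ∂μ) ≤ P ∧
          r = ∫ ω, Real.log (1 + f (H ω) * H ω / (1 + f (H ω) * G ω)) ∂μ})
      atTop (nhds (∫ ω, Real.log (1 + H ω / G ω) ∂μ)) := by
  have hbound : ∀ P : ℝ, ∀ r ∈ {r : ℝ | ∃ f : ℝ → ℝ, Measurable f ∧ (∀ x, 0 ≤ f x) ∧
      (∫ ω, f (H ω) ∂μ) ≤ P ∧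
      r = ∫ ω, Real.log (1 + f (H ω) * H ω / (1 + f (H ω) * G ω)) ∂μ},
      r ≤ ∫ ω, Real.log (1 + H ω / G ω) ∂μ := by
    rintro P r ⟨f, -, hf0, -, rfl⟩
    exact integral_log_one_add_mul_div_one_add_mul_le hH hG hint fun ω => hf0 (H ω)
  refine tendsto_of_tendsto_of_tendsto_of_le_of_le'
    (tendsto_integral_log_one_add_mul_div_one_add_mul_atTop hHm hGm hH hG hint)
    tendsto_const_nhds ?_ (Eventually.of_forall fun P => Real.sSup_le (hbound P)
      (integral_log_one_add_div_nonneg hH hG))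
  filter_upwards [eventually_ge_atTop 0] with P hP
  exact le_csSup ⟨_, hbound P⟩ ⟨fun _ => P, measurable_const, fun _ => hP, by simp, rfl⟩

open Filter MeasureTheory in
/-- The optimized one-way secure rate `S(P)` — the supremum over all measurable
nonnegative power allocations `f` with `∫ f(H) dμ ≤ P` of
`∫ log (1 + f(H)·H/(1 + f(H)·G)) dμ` — tends to `∫ log (1 + H/G) dμ` as `P → ∞`. -/
theorem tendsto_sSup_power_constrained_rate_atTop
    {Ω : Type*} [MeasurableSpace Ω] (μ : Measure Ω) [IsProbabilityMeasure μ]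
    (H G : Ω → ℝ) (hHm : Measurable H) (hGm : Measurable G)
    (hH : ∀ ω, 0 ≤ H ω) (hG : ∀ᵐ ω ∂μ, 0 < G ω)
    (hint : Integrable (fun ω => Real.log (1 + H ω / G ω)) μ)
    (hHint : Integrable H μ) :
    Tendsto (fun P : ℝ =>
        sSup {r : ℝ | ∃ f : ℝ → ℝ, Measurable f ∧ (∀ x, 0 ≤ f x) ∧
          (∫ ω, f (H ω) ∂μ) ≤ P ∧
          r = ∫ ω, Real.log (1 + f (H ω) * H ω / (1 + f (H ω) * G ω)) ∂μ})
      atTop (nhds (∫ ω, Real.log (1 + H ω / G ω) ∂μ)) :=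
  tendsto_sSup_power_constrained_rate_atTop_general μ H G hHm hGm hH hG hint
end

section
/- Let (Ω, μ) be a probability space and let H₁, G₁, H₂, G₂ : Ω → ℝ be nonnegative measurable functions with G₁ > 0 and G₂ > 0 almost everywhere, such that ω ↦ log(1 + H₁(ω)/G₁(ω)) and ω ↦ log(1 + H₂(ω)/G₂(ω)) are integrable. Let T ≥ 2 be a natural number and ρ a real number with ρ² < 1. For P > 1 set P₁ = P − √P, P₂ = √P/(T − 1), α = P₁/(P₁ + 1), and define R_PD(P) = (1/T)·(−log(1 − α²ρ²)) + ((T−1)/T)·( ∫ log(1 + P₂·H₁/(1 + P₂·G₁)) dμ − log(1 + P₂/(1 + P₁)) + ∫ log(1 + P₂·H₂/(1 + P₂·G₂)) dμ − log(1 + P₂/(1 + P₁)) ). Then R_PD(P) tends to −(1/T)·log(1 − ρ²) + ((T−1)/T)·( ∫ log(1 + H₁/G₁) dμ + ∫ log(1 + H₂/G₂) dμ ) as P tends to infinity. -/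
/-!
As `P → ∞` both the training power `P₁ = P − √P` and the per-symbol power `P₂ = √P/(T−1)`
tend to infinity, but `P₂/(1 + P₁) → 0`. Hence `α → 1`, the penalty terms `log (1 + P₂/(1 + P₁))`
vanish, and each integrand `log (1 + P₂ H/(1 + P₂ G))` increases to `log (1 + H/G)`, which is
integrable and so dominates the integrands.
-/

open Real Filter MeasureTheory Topology

lemma tendsto_div_add_one_atTop : Tendsto (fun x : ℝ => x / (x + 1)) atTop (𝓝 1) := by
  have h : Tendsto (fun x : ℝ => 1 - (x + 1)⁻¹) atTop (𝓝 (1 - 0)) :=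
    (tendsto_atTop_add_const_right _ 1 tendsto_id).inv_tendsto_atTop.const_sub 1
  rw [sub_zero] at h
  refine h.congr' ?_
  filter_upwards [eventually_gt_atTop 0] with x hx
  field_simp
  ring

lemma tendsto_sub_sqrt_atTop : Tendsto (fun P : ℝ => P - √P) atTop atTop := by
  have h : Tendsto (fun P : ℝ => √P * (√P + -1)) atTop atTop :=
    tendsto_sqrt_atTop.atTop_mul_atTop₀ (tendsto_atTop_add_const_right _ _ tendsto_sqrt_atTop)
  refine h.congr' ?_
  filter_upwards [eventually_ge_atTop 0] with P hP
  rw [mul_add, mul_self_sqrt hP]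
  ring

lemma tendsto_sqrt_div_div_one_add_sub_sqrt (a : ℝ) :
    Tendsto (fun P : ℝ => √P / a / (1 + (P - √P))) atTop (𝓝 0) := by
  -- `√P / (1 + (P - √P)) = (√P - 1 + (√P)⁻¹)⁻¹` and the denominator on the right is unbounded.
  have hden : Tendsto (fun P : ℝ => √P + -1 + (√P)⁻¹) atTop atTop :=
    (tendsto_atTop_add_const_right _ _ tendsto_sqrt_atTop).atTop_add_nonneg
      fun P => inv_nonneg.mpr (sqrt_nonneg P)
  have h := hden.inv_tendsto_atTop.div_const a
  rw [zero_div] at h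
  refine h.congr' ?_
  filter_upwards [eventually_gt_atTop 0] with P hP
  have hsq : √P * √P = P := mul_self_sqrt hP.le
  have hs : 0 < √P := sqrt_pos.mpr hP
  rw [div_right_comm, Pi.inv_apply]
  generalize √P = s at hsq hs ⊢
  subst hsq
  field_simp
  ring

lemma tendsto_mul_div_one_add_mul_atTop {h g : ℝ} (hg : g ≠ 0) :
    Tendsto (fun c : ℝ => c * h / (1 + c * g)) atTop (𝓝 (h / g)) := by
  have hden : Tendsto (fun c : ℝ => c⁻¹ + g) atTop (𝓝 g) := by
    simpa using tendsto_inv_atTop_zero.add_const g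
  have h' : Tendsto (fun c : ℝ => h / (c⁻¹ + g)) atTop (𝓝 (h / g)) :=
    tendsto_const_nhds.div hden hg
  refine h'.congr' ?_
  filter_upwards [eventually_gt_atTop 0] with c hc
  field_simp

lemma mul_div_one_add_mul_le_div {c h g : ℝ} (hc : 0 ≤ c) (hh : 0 ≤ h) (hg : 0 < g) :
    c * h / (1 + c * g) ≤ h / g := by
  rw [div_le_div_iff₀ (by positivity) hg]
  nlinarith

lemma norm_log_one_add_mul_div_one_add_mul_le {c h g : ℝ} (hc : 0 ≤ c) (hh : 0 ≤ h)
    (hg : 0 < g) : ‖log (1 + c * h / (1 + c * g))‖ ≤ log (1 + h / g) := by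
  rw [norm_of_nonneg (log_nonneg (by simp only [le_add_iff_nonneg_right]; positivity))]
  exact log_le_log (by positivity) (by linarith [mul_div_one_add_mul_le_div hc hh hg])

theorem tendsto_integral_log_one_add_mul_div_one_add_mul {Ω : Type*} [MeasurableSpace Ω]
    {μ : Measure Ω} {H G : Ω → ℝ} (hHm : AEMeasurable H μ) (hGm : AEMeasurable G μ)
    (hH : ∀ᵐ ω ∂μ, 0 ≤ H ω) (hG : ∀ᵐ ω ∂μ, 0 < G ω)
    (hint : Integrable (fun ω => log (1 + H ω / G ω)) μ) :
    Tendsto (fun c : ℝ => ∫ ω, log (1 + c * H ω / (1 + c * G ω)) ∂μ) atTop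
      (𝓝 (∫ ω, log (1 + H ω / G ω) ∂μ)) := by
  refine tendsto_integral_filter_of_dominated_convergence _ ?_ ?_ hint ?_
  · exact .of_forall fun c => (aemeasurable_const.add ((hHm.const_mul c).div
      (aemeasurable_const.add (hGm.const_mul c)))).log.aestronglyMeasurable
  · filter_upwards [eventually_ge_atTop 0] with c hc
    filter_upwards [hH, hG] with ω hHω hGω
    exact norm_log_one_add_mul_div_one_add_mul_le hc hHω hGω
  · filter_upwards [hH, hG] with ω hHω hGω
    exact ((tendsto_mul_div_one_add_mul_atTop hGω.ne').const_add 1).log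
      (by positivity : (0 : ℝ) < 1 + H ω / G ω).ne'

open Filter MeasureTheory in
theorem tendsto_RPD_atTop_general
    {Ω : Type*} [MeasurableSpace Ω] (μ : Measure Ω)
    (H₁ G₁ H₂ G₂ : Ω → ℝ)
    (hH₁m : Measurable H₁) (hG₁m : Measurable G₁)
    (hH₂m : Measurable H₂) (hG₂m : Measurable G₂)
    (hH₁ : ∀ ω, 0 ≤ H₁ ω)
    (hH₂ : ∀ ω, 0 ≤ H₂ ω)
    (hG₁pos : ∀ᵐ ω ∂μ, 0 < G₁ ω) (hG₂pos : ∀ᵐ ω ∂μ, 0 < G₂ ω)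
    (hint₁ : Integrable (fun ω => Real.log (1 + H₁ ω / G₁ ω)) μ)
    (hint₂ : Integrable (fun ω => Real.log (1 + H₂ ω / G₂ ω)) μ)
    (T : ℕ) (hT : 2 ≤ T) (ρ : ℝ) (hρ : ρ ^ 2 < 1) :
    Tendsto (fun P : ℝ =>
        (1 / (T : ℝ)) *
            (-Real.log (1 - ((P - Real.sqrt P) / ((P - Real.sqrt P) + 1)) ^ 2 * ρ ^ 2)) +
          (((T : ℝ) - 1) / (T : ℝ)) *
            ((∫ ω, Real.log (1 + (Real.sqrt P / ((T : ℝ) - 1)) * H₁ ω /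
                  (1 + (Real.sqrt P / ((T : ℝ) - 1)) * G₁ ω)) ∂μ) -
              Real.log (1 + (Real.sqrt P / ((T : ℝ) - 1)) / (1 + (P - Real.sqrt P))) +
              (∫ ω, Real.log (1 + (Real.sqrt P / ((T : ℝ) - 1)) * H₂ ω /
                  (1 + (Real.sqrt P / ((T : ℝ) - 1)) * G₂ ω)) ∂μ) -
              Real.log (1 + (Real.sqrt P / ((T : ℝ) - 1)) / (1 + (P - Real.sqrt P)))))
      atTop
      (nhds (-(1 / (T : ℝ)) * Real.log (1 - ρ ^ 2) +
        (((T : ℝ) - 1) / (T : ℝ)) *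
          ((∫ ω, Real.log (1 + H₁ ω / G₁ ω) ∂μ) +
            (∫ ω, Real.log (1 + H₂ ω / G₂ ω) ∂μ)))) := by
  have hT1 : (0 : ℝ) < T - 1 := by
    have : (2 : ℝ) ≤ T := by exact_mod_cast hT
    linarith
  have hP₂ : Tendsto (fun P : ℝ => √P / (T - 1)) atTop atTop :=
    tendsto_sqrt_atTop.atTop_div_const hT1
  have hα := tendsto_div_add_one_atTop.comp tendsto_sub_sqrt_atTop
  have hcorr : Tendsto (fun P : ℝ => -log (1 - ((P - √P) / ((P - √P) + 1)) ^ 2 * ρ ^ 2)) atTop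
      (𝓝 (-log (1 - ρ ^ 2))) := by
    simpa using ((((hα.pow 2).mul_const (ρ ^ 2)).const_sub 1).log (by nlinarith)).neg
  have hpenalty : Tendsto (fun P : ℝ => log (1 + √P / (T - 1) / (1 + (P - √P)))) atTop
      (𝓝 0) := by
    simpa using ((tendsto_sqrt_div_div_one_add_sub_sqrt _).const_add 1).log (by norm_num)
  have hI₁ := (tendsto_integral_log_one_add_mul_div_one_add_mul hH₁m.aemeasurable
    hG₁m.aemeasurable (.of_forall hH₁) hG₁pos hint₁).comp hP₂
  have hI₂ := (tendsto_integral_log_one_add_mul_div_one_add_mul hH₂m.aemeasurable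
    hG₂m.aemeasurable (.of_forall hH₂) hG₂pos hint₂).comp hP₂
  simp only [Function.comp_def] at hI₁ hI₂
  convert (hcorr.const_mul (1 / (T : ℝ))).add
    ((((hI₁.sub hpenalty).add hI₂).sub hpenalty).const_mul (((T : ℝ) - 1) / T)) using 2
  ring

open Filter MeasureTheory in
/-- High-SNR limit of the public-discussion achievable rate `R_PD(P)` of Proposition 1,
with power split `P₁ = P − √P`, `P₂ = √P/(T−1)` and `α = P₁/(P₁+1)`:
`R_PD(P) → −(1/T)·log (1−ρ²) + ((T−1)/T)·(∫ log (1+H₁/G₁) dμ + ∫ log (1+H₂/G₂) dμ)`. -/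
theorem tendsto_RPD_atTop
    {Ω : Type*} [MeasurableSpace Ω] (μ : Measure Ω) [IsProbabilityMeasure μ]
    (H₁ G₁ H₂ G₂ : Ω → ℝ)
    (hH₁m : Measurable H₁) (hG₁m : Measurable G₁)
    (hH₂m : Measurable H₂) (hG₂m : Measurable G₂)
    (hH₁ : ∀ ω, 0 ≤ H₁ ω) (hG₁ : ∀ ω, 0 ≤ G₁ ω)
    (hH₂ : ∀ ω, 0 ≤ H₂ ω) (hG₂ : ∀ ω, 0 ≤ G₂ ω)
    (hG₁pos : ∀ᵐ ω ∂μ, 0 < G₁ ω) (hG₂pos : ∀ᵐ ω ∂μ, 0 < G₂ ω)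
    (hint₁ : Integrable (fun ω => Real.log (1 + H₁ ω / G₁ ω)) μ)
    (hint₂ : Integrable (fun ω => Real.log (1 + H₂ ω / G₂ ω)) μ)
    (T : ℕ) (hT : 2 ≤ T) (ρ : ℝ) (hρ : ρ ^ 2 < 1) :
    Tendsto (fun P : ℝ =>
        (1 / (T : ℝ)) *
            (-Real.log (1 - ((P - Real.sqrt P) / ((P - Real.sqrt P) + 1)) ^ 2 * ρ ^ 2)) +
          (((T : ℝ) - 1) / (T : ℝ)) *
            ((∫ ω, Real.log (1 + (Real.sqrt P / ((T : ℝ) - 1)) * H₁ ω /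
                  (1 + (Real.sqrt P / ((T : ℝ) - 1)) * G₁ ω)) ∂μ) -
              Real.log (1 + (Real.sqrt P / ((T : ℝ) - 1)) / (1 + (P - Real.sqrt P))) +
              (∫ ω, Real.log (1 + (Real.sqrt P / ((T : ℝ) - 1)) * H₂ ω /
                  (1 + (Real.sqrt P / ((T : ℝ) - 1)) * G₂ ω)) ∂μ) -
              Real.log (1 + (Real.sqrt P / ((T : ℝ) - 1)) / (1 + (P - Real.sqrt P)))))
      atTop
      (nhds (-(1 / (T : ℝ)) * Real.log (1 - ρ ^ 2) +
        (((T : ℝ) - 1) / (T : ℝ)) *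
          ((∫ ω, Real.log (1 + H₁ ω / G₁ ω) ∂μ) +
            (∫ ω, Real.log (1 + H₂ ω / G₂ ω) ∂μ)))) :=
  tendsto_RPD_atTop_general μ H₁ G₁ H₂ G₂ hH₁m hG₁m hH₂m hG₂m hH₁ hH₂ hG₁pos hG₂pos hint₁ hint₂ T hT
    ρ hρ
end

section
/- Let (Ω, F, μ) be a probability space and let X, Y : Ω → ℝ be independent random variables, each with law the exponential distribution of rate 1 on ℝ. Then the function ω ↦ log(1 + X(ω)/Y(ω)) is integrable and ∫ log(1 + X(ω)/Y(ω)) dμ(ω) = 1. -/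
/-!
For `c ≥ 0`, conditioning on `Y` gives `P(X > c Y) = E[exp (-c Y)] = 1 / (1 + c)`. Hence
`P(log (1 + X / Y) > t) = P(X > (exp t - 1) Y) = exp (-t)`: the variable `log (1 + X / Y)` is
itself standard exponential, and the layer-cake formula gives its mean `1`.
-/

open MeasureTheory ProbabilityTheory Real Set
open scoped ENNReal

lemma Real.lt_log_one_add_div_iff {t x y : ℝ} (hx : 0 ≤ x) (hy : 0 < y) :
    t < log (1 + x / y) ↔ (exp t - 1) * y < x := by
  rw [lt_log_iff_exp_lt (by positivity), ← lt_div_iff₀ hy]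
  constructor <;> intro h <;> linarith

section LayerCake

variable {α : Type*} [MeasurableSpace α] {μ : Measure α} {f : α → ℝ} {r : ℝ}

lemma integrable_and_integral_eq_inv_of_meas_lt_eq_exp (hr : 0 < r) (hf0 : 0 ≤ᵐ[μ] f)
    (hf : AEStronglyMeasurable f μ)
    (htail : ∀ t, 0 < t → μ {a | t < f a} = ENNReal.ofReal (exp (-r * t))) :
    Integrable f μ ∧ ∫ a, f a ∂μ = r⁻¹ := by
  have hlintegral : ∫⁻ a, ENNReal.ofReal (f a) ∂μ = ENNReal.ofReal r⁻¹ := by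
    rw [lintegral_eq_lintegral_meas_lt μ hf0 hf.aemeasurable,
      setLIntegral_congr_fun measurableSet_Ioi htail,
      ← ofReal_integral_eq_lintegral_ofReal (exp_neg_integrableOn_Ioi 0 hr)
        (.of_forall fun _ ↦ (exp_pos _).le),
      integral_exp_mul_Ioi (by linarith), mul_zero, exp_zero]
    congr 1
    ring
  refine ⟨(lintegral_ofReal_ne_top_iff_integrable hf hf0).1
    (hlintegral ▸ ENNReal.ofReal_ne_top), ?_⟩
  rw [integral_eq_lintegral_of_nonneg_ae hf0 hf, hlintegral, ENNReal.toReal_ofReal (by positivity)]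

end LayerCake

namespace ProbabilityTheory

section ExponentialDistribution

variable {r s : ℝ}

lemma measurable_exponentialPDF (r : ℝ) : Measurable (exponentialPDF r) :=
  (measurable_exponentialPDFReal r).ennreal_ofReal

lemma expMeasure_Iic_zero (hr : 0 < r) : expMeasure r (Iic 0) = 0 := by
  have := isProbabilityMeasure_expMeasure hr
  rw [← ofReal_cdf, cdf_expMeasure_eq hr]
  simp

lemma ae_pos_expMeasure (hr : 0 < r) : ∀ᵐ x ∂expMeasure r, 0 < x := by
  rw [ae_iff]
  simp only [not_lt]
  exact expMeasure_Iic_zero hr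

lemma expMeasure_Ioi (hr : 0 < r) {a : ℝ} (ha : 0 ≤ a) :
    expMeasure r (Ioi a) = ENNReal.ofReal (exp (-(r * a))) := by
  have := isProbabilityMeasure_expMeasure hr
  have hle : exp (-(r * a)) ≤ 1 := exp_le_one_iff.2 (by nlinarith)
  rw [← compl_Iic, prob_compl_eq_one_sub measurableSet_Iic, ← ofReal_cdf, cdf_expMeasure_eq hr,
    if_pos ha, ← ENNReal.ofReal_one, ← ENNReal.ofReal_sub _ (by linarith), sub_sub_cancel]

lemma lintegral_exp_neg_mul_expMeasure (hr : 0 < r) (hs : 0 ≤ s) :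
    ∫⁻ x, ENNReal.ofReal (exp (-(s * x))) ∂expMeasure r = ENNReal.ofReal (r / (r + s)) := by
  have hrs : 0 < r + s := by linarith
  have hdensity : ∀ x, exponentialPDF r x * ENNReal.ofReal (exp (-(s * x)))
      = ENNReal.ofReal (r / (r + s)) * exponentialPDF (r + s) x := by
    intro x
    rcases le_or_gt 0 x with hx | hx
    · rw [exponentialPDF_of_nonneg hx, exponentialPDF_of_nonneg hx,
        ← ENNReal.ofReal_mul (by positivity), ← ENNReal.ofReal_mul (by positivity)]
      congr 1
      rw [mul_assoc, ← exp_add]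
      field_simp
      ring_nf
    · simp [exponentialPDF_of_neg hx]
  change ∫⁻ x, _ ∂volume.withDensity (exponentialPDF r) = _
  rw [lintegral_withDensity_eq_lintegral_mul _ (measurable_exponentialPDF r) (by fun_prop)]
  simp only [Pi.mul_apply, hdensity]
  rw [lintegral_const_mul _ (measurable_exponentialPDF _), lintegral_exponentialPDF_eq_one hrs,
    mul_one]

lemma expMeasure_prod_setOf_mul_lt (hr : 0 < r) (hs : 0 < s) {c : ℝ} (hc : 0 ≤ c) :
    (expMeasure r).prod (expMeasure s) {p | c * p.1 < p.2} = ENNReal.ofReal (r / (r + s * c)) := by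
  have := isProbabilityMeasure_expMeasure hs
  rw [Measure.prod_apply (measurableSet_lt (by fun_prop) (by fun_prop)),
    ← lintegral_exp_neg_mul_expMeasure hr (mul_nonneg hs.le hc)]
  refine lintegral_congr_ae ?_
  filter_upwards [ae_pos_expMeasure hr] with x hx
  rw [mul_assoc, ← expMeasure_Ioi hs (mul_nonneg hc hx.le)]
  rfl

end ExponentialDistribution

section RandomVariables

variable {Ω : Type*} {_ : MeasurableSpace Ω} {μ : Measure Ω} {X Y : Ω → ℝ} {r s : ℝ}

lemma ae_pos_of_map_eq_expMeasure (hr : 0 < r) (hX : Measurable X)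
    (hXlaw : μ.map X = expMeasure r) : ∀ᵐ ω ∂μ, 0 < X ω :=
  ae_of_ae_map hX.aemeasurable (hXlaw ▸ ae_pos_expMeasure hr)

lemma measure_setOf_mul_lt_of_indepFun [IsFiniteMeasure μ] (hr : 0 < r) (hs : 0 < s)
    (hX : Measurable X) (hY : Measurable Y) (hXY : IndepFun X Y μ)
    (hXlaw : μ.map X = expMeasure s) (hYlaw : μ.map Y = expMeasure r) {c : ℝ} (hc : 0 ≤ c) :
    μ {ω | c * Y ω < X ω} = ENNReal.ofReal (r / (r + s * c)) := by
  have hjoint : μ.map (fun ω ↦ (Y ω, X ω)) = (expMeasure r).prod (expMeasure s) := by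
    rw [(indepFun_iff_map_prod_eq_prod_map_map hY.aemeasurable hX.aemeasurable).1 hXY.symm,
      hXlaw, hYlaw]
  rw [← expMeasure_prod_setOf_mul_lt hr hs hc, ← hjoint,
    Measure.map_apply (hY.prodMk hX) (measurableSet_lt (by fun_prop) (by fun_prop))]
  rfl

lemma measure_lt_log_one_add_div_of_indepFun [IsFiniteMeasure μ] (hr : 0 < r)
    (hX : Measurable X) (hY : Measurable Y) (hXY : IndepFun X Y μ)
    (hXlaw : μ.map X = expMeasure r) (hYlaw : μ.map Y = expMeasure r) {t : ℝ} (ht : 0 ≤ t) :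
    μ {ω | t < log (1 + X ω / Y ω)} = ENNReal.ofReal (exp (-t)) := by
  have hset : {ω | t < log (1 + X ω / Y ω)} =ᵐ[μ] {ω | (exp t - 1) * Y ω < X ω} := by
    filter_upwards [ae_pos_of_map_eq_expMeasure hr hX hXlaw,
      ae_pos_of_map_eq_expMeasure hr hY hYlaw] with ω hXω hYω
    exact propext (Real.lt_log_one_add_div_iff hXω.le hYω)
  rw [measure_congr hset, measure_setOf_mul_lt_of_indepFun hr hr hX hY hXY hXlaw hYlaw
    (by linarith [add_one_le_exp t]), exp_neg, show r + r * (exp t - 1) = r * exp t by ring,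
    div_mul_cancel_left₀ hr.ne']

end RandomVariables

end ProbabilityTheory

open MeasureTheory ProbabilityTheory in
/-- For independent rate-1 exponential random variables `X, Y`,
`log (1 + X/Y)` is integrable and `∫ log (1 + X/Y) dμ = 1`. -/
theorem integral_log_ratio_exponential
    {Ω : Type*} {F : MeasurableSpace Ω} (μ : Measure Ω) [IsProbabilityMeasure μ]
    (X Y : Ω → ℝ) (hXm : Measurable X) (hYm : Measurable Y)
    (hindep : IndepFun X Y μ)
    (hXlaw : μ.map X = expMeasure 1) (hYlaw : μ.map Y = expMeasure 1) :
    Integrable (fun ω => Real.log (1 + X ω / Y ω)) μ ∧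
      ∫ ω, Real.log (1 + X ω / Y ω) ∂μ = 1 := by
  have hnonneg : ∀ᵐ ω ∂μ, 0 ≤ log (1 + X ω / Y ω) := by
    filter_upwards [ae_pos_of_map_eq_expMeasure one_pos hXm hXlaw,
      ae_pos_of_map_eq_expMeasure one_pos hYm hYlaw] with ω hX hY
    exact log_nonneg (le_add_of_nonneg_right (div_pos hX hY).le)
  simpa using integrable_and_integral_eq_inv_of_meas_lt_eq_exp one_pos hnonneg
    (measurable_const.add (hXm.div hYm)).log.aestronglyMeasurable fun t ht ↦ by
      simpa using measure_lt_log_one_add_div_of_indepFun one_pos hXm hYm hindep hXlaw hYlaw ht.le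
end
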